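/- Let a_1, …, a_n > 0 with weights p_1, …, p_n > 0 summing to at most 1, and let A = max_i a_i. Let q₁(P̄) solve A · E_1(A/q₁) = P̄ and q₂(P̄) solve Σ_i a_i p_i E_1(a_i/q₂) = P̄. Then both q₁(P̄) and q₂(P̄) tend to ∞ as P̄ → ∞, and ln q₂(P̄) / ln q₁(P̄) → A / (Σ_i a_i p_i) ≥ 1. -/

import Mathlib

/-!
Near `0⁺`, `E₁(x) = -log x + O(1)`. Hence if `∑ᵢ wᵢ E₁(bᵢ/q) = P̄`, then once `q` is large,
`P̄ = (∑ᵢ wᵢ) log q + O(1)`, so `log q / P̄ → 1 / ∑ᵢ wᵢ`. The cutoff `q₁` is the one-term case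
`w = b = A`, and `q₂` the case `wᵢ = aᵢ pᵢ`, `bᵢ = aᵢ`; dividing the two limits gives the
ratio `A / ∑ᵢ aᵢ pᵢ`, which is at least `1` because `∑ᵢ aᵢ pᵢ ≤ A ∑ᵢ pᵢ ≤ A`.
-/

open MeasureTheory Real Filter Finset

/-- The exponential integral `E₁(x) = ∫_x^∞ e^{-t}/t dt`. -/
noncomputable def E1 (x : ℝ) : ℝ := ∫ t in Set.Ioi x, Real.exp (-t) / t

open Topology Set

lemma integrableOn_exp_neg_div_Ioi {x : ℝ} (hx : 0 < x) :
    IntegrableOn (fun t => exp (-t) / t) (Ioi x) := by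
  have hexp : IntegrableOn (fun t => exp (-t)) (Ioi x) := by
    simpa using exp_neg_integrableOn_Ioi x one_pos
  refine (hexp.const_mul x⁻¹).mono' (by fun_prop : Measurable fun t : ℝ => exp (-t) / t).aestronglyMeasurable ?_
  filter_upwards [ae_restrict_mem measurableSet_Ioi] with t (ht : x < t)
  have ht0 : 0 < t := hx.trans ht
  rw [norm_of_nonneg (by positivity), div_eq_inv_mul]
  gcongr

lemma E1_antitoneOn : AntitoneOn E1 (Ioi 0) := by
  intro x (hx : 0 < x) y _ hxy
  refine setIntegral_mono_set (integrableOn_exp_neg_div_Ioi hx) ?_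
    (Ioi_subset_Ioi hxy).eventuallyLE
  filter_upwards [ae_restrict_mem measurableSet_Ioi] with t (ht : x < t)
  have : 0 < t := hx.trans ht
  positivity

lemma integral_Ioc_one_div {x : ℝ} (hx : 0 < x) (hx1 : x ≤ 1) :
    ∫ t in Ioc x 1, 1 / t = -log x := by
  have h0 : (0 : ℝ) ∉ uIcc x 1 := by
    rw [uIcc_of_le hx1]; exact fun h => absurd h.1 hx.not_ge
  rw [← intervalIntegral.integral_of_le hx1, integral_one_div h0, div_eq_mul_inv, one_mul,
    log_inv]

lemma abs_exp_neg_div_sub_one_div_le {t : ℝ} (ht : 0 < t) : |exp (-t) / t - 1 / t| ≤ 1 := by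
  rw [← sub_div, abs_div, abs_of_pos ht, div_le_one ht, abs_sub_comm,
    abs_of_nonneg (by simpa using exp_le_one_iff.2 (neg_nonpos.2 ht.le))]
  linarith [add_one_le_exp (-t)]

/-- On `(x, 1]` the integrand differs from `1/t` by at most `1`; the tail beyond `1` is `E₁ 1`. -/
lemma abs_E1_add_log_le {x : ℝ} (hx : 0 < x) (hx1 : x ≤ 1) :
    |E1 x + log x| ≤ 1 + |E1 1| := by
  have hint : IntegrableOn (fun t => exp (-t) / t) (Ioc x 1) :=
    (integrableOn_exp_neg_div_Ioi hx).mono_set Ioc_subset_Ioi_self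
  have hint' : IntegrableOn (fun t => 1 / t) (Ioc x 1) := by
    rw [← intervalIntegrable_iff_integrableOn_Ioc_of_le hx1]
    refine intervalIntegral.intervalIntegrable_one_div (fun t ht h => ?_) continuousOn_id
    rw [uIcc_of_le hx1] at ht
    exact absurd (h ▸ ht.1) hx.not_ge
  have hsplit : E1 x + log x = (∫ t in Ioc x 1, (exp (-t) / t - 1 / t)) + E1 1 := by
    rw [integral_sub hint hint', integral_Ioc_one_div hx hx1, E1, E1,
      ← Ioc_union_Ioi_eq_Ioi hx1, setIntegral_union (Ioc_disjoint_Ioi le_rfl) measurableSet_Ioi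
        hint (integrableOn_exp_neg_div_Ioi one_pos)]
    ring
  have hbound : ‖∫ t in Ioc x 1, (exp (-t) / t - 1 / t)‖ ≤ 1 := by
    calc ‖∫ t in Ioc x 1, (exp (-t) / t - 1 / t)‖ ≤ 1 * volume.real (Ioc x 1) :=
          norm_setIntegral_le_of_norm_le_const measure_Ioc_lt_top
            fun t ht => abs_exp_neg_div_sub_one_div_le (hx.trans ht.1)
      _ ≤ 1 := by rw [one_mul, Real.volume_real_Ioc_of_le hx1]; linarith
  rw [hsplit]
  exact (abs_add_le _ _).trans (by rw [← Real.norm_eq_abs]; linarith)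

lemma tendsto_div_of_abs_mul_sub_le {L : ℝ → ℝ} {S K : ℝ} (hS : S ≠ 0)
    (h : ∀ᶠ P in atTop, |S * L P - P| ≤ K) :
    Tendsto (fun P => L P / P) atTop (𝓝 (1 / S)) := by
  have herr : Tendsto (fun P => (S * L P - P) / P) atTop (𝓝 0) := by
    refine squeeze_zero_norm' (a := fun P => K / P) ?_ (tendsto_const_nhds.div_atTop tendsto_id)
    filter_upwards [h, eventually_gt_atTop 0] with P hP hP0
    rw [norm_div, norm_of_nonneg hP0.le, Real.norm_eq_abs]
    gcongr
  have hlim := (herr.const_add 1).div_const S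
  rw [add_zero] at hlim
  refine hlim.congr' ?_
  filter_upwards [eventually_ne_atTop 0] with P hP
  field_simp
  ring

section WeightedE1

variable {ι : Type*} [Fintype ι] {w b : ι → ℝ}

lemma monotoneOn_sum_mul_E1_div (hw : ∀ i, 0 ≤ w i) (hb : ∀ i, 0 < b i) :
    MonotoneOn (fun q => ∑ i, w i * E1 (b i / q)) (Ioi 0) := by
  intro q (hq : 0 < q) r (hr : 0 < r) hqr
  refine sum_le_sum fun i _ => mul_le_mul_of_nonneg_left ?_ (hw i)
  exact E1_antitoneOn (div_pos (hb i) hr) (div_pos (hb i) hq)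
    (div_le_div_of_nonneg_left (hb i).le hq hqr)

lemma exists_abs_sum_mul_log_sub_sum_mul_E1_div_le (hw : ∀ i, 0 ≤ w i) (hb : ∀ i, 0 < b i) :
    ∃ K, ∀ q, (∀ i, b i ≤ q) → |(∑ i, w i) * log q - ∑ i, w i * E1 (b i / q)| ≤ K := by
  refine ⟨∑ i, w i * (1 + |E1 1| + |log (b i)|), fun q hq => ?_⟩
  rw [sum_mul, ← sum_sub_distrib]
  refine (abs_sum_le_sum_abs _ _).trans (sum_le_sum fun i _ => ?_)
  have hq0 : 0 < q := (hb i).trans_le (hq i)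
  have hE := abs_E1_add_log_le (div_pos (hb i) hq0) ((div_le_one hq0).2 (hq i))
  rw [log_div (hb i).ne' hq0.ne'] at hE
  rw [← mul_sub, abs_mul, abs_of_nonneg (hw i)]
  refine mul_le_mul_of_nonneg_left ?_ (hw i)
  calc |log q - E1 (b i / q)| = |-(E1 (b i / q) + (log (b i) - log q)) + log (b i)| := by ring_nf
    _ ≤ 1 + |E1 1| + |log (b i)| := (abs_add_le _ _).trans (by rw [abs_neg]; linarith)

variable {q : ℝ → ℝ}

theorem tendsto_atTop_of_sum_mul_E1_div_eq (hw : ∀ i, 0 ≤ w i) (hb : ∀ i, 0 < b i)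
    (hq : ∀ P, 0 < P → 0 < q P ∧ ∑ i, w i * E1 (b i / q P) = P) :
    Tendsto q atTop atTop := by
  refine tendsto_atTop.2 fun M => ?_
  have hM : (0 : ℝ) < max M 1 := lt_max_of_lt_right one_pos
  filter_upwards [eventually_gt_atTop 0,
    eventually_gt_atTop (∑ i, w i * E1 (b i / max M 1))] with P hP hPM
  obtain ⟨hq0, hqP⟩ := hq P hP
  by_contra! hqM
  have hle := monotoneOn_sum_mul_E1_div hw hb hq0 hM (hqM.le.trans (le_max_left M 1))
  simp only [hqP] at hle
  linarith

theorem tendsto_log_div_of_sum_mul_E1_div_eq [Nonempty ι] (hw : ∀ i, 0 < w i)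
    (hb : ∀ i, 0 < b i) (hq : ∀ P, 0 < P → 0 < q P ∧ ∑ i, w i * E1 (b i / q P) = P) :
    Tendsto (fun P => log (q P) / P) atTop (𝓝 (1 / ∑ i, w i)) := by
  have hw' : ∀ i, 0 ≤ w i := fun i => (hw i).le
  obtain ⟨K, hK⟩ := exists_abs_sum_mul_log_sub_sum_mul_E1_div_le hw' hb
  refine tendsto_div_of_abs_mul_sub_le (K := K) (sum_pos (fun i _ => hw i) univ_nonempty).ne' ?_
  have hlarge : ∀ᶠ P in atTop, ∀ i, b i ≤ q P :=
    eventually_all.2 fun i => (tendsto_atTop_of_sum_mul_E1_div_eq hw' hb hq).eventually_ge_atTop _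
  filter_upwards [hlarge, eventually_gt_atTop 0] with P hP hP0
  simpa only [(hq P hP0).2] using hK (q P) hP

end WeightedE1

/-- With thresholds `a_i > 0`, weights `p_i > 0` summing to at most `1`,
`A = max_i a_i`, and cutoffs `q₁(P̄)`, `q₂(P̄)` solving
`A·E₁(A/q₁) = P̄` and `Σ_i a_i p_i E₁(a_i/q₂) = P̄`, both cutoffs tend to `∞`
and `ln q₂(P̄)/ln q₁(P̄) → A/(Σ_i a_i p_i) ≥ 1`. -/
theorem stmt15 (n : ℕ) (hn : 0 < n) (a p : Fin n → ℝ)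
    (ha : ∀ i, 0 < a i) (hp : ∀ i, 0 < p i) (hpsum : ∑ i, p i ≤ 1)
    (A : ℝ) (hA : haveI : Nonempty (Fin n) := Fin.pos_iff_nonempty.mp hn
      A = Finset.univ.sup' Finset.univ_nonempty a)
    (q₁ q₂ : ℝ → ℝ)
    (hq₁ : ∀ Pbar : ℝ, 0 < Pbar → 0 < q₁ Pbar ∧ A * E1 (A / q₁ Pbar) = Pbar)
    (hq₂ : ∀ Pbar : ℝ, 0 < Pbar →
      0 < q₂ Pbar ∧ (∑ i, a i * p i * E1 (a i / q₂ Pbar)) = Pbar) :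
    Tendsto q₁ atTop atTop ∧ Tendsto q₂ atTop atTop ∧
    Tendsto (fun Pbar : ℝ => Real.log (q₂ Pbar) / Real.log (q₁ Pbar)) atTop
      (nhds (A / ∑ i, a i * p i)) ∧
    1 ≤ A / ∑ i, a i * p i := by
  have : Nonempty (Fin n) := Fin.pos_iff_nonempty.mp hn
  have haA : ∀ i, a i ≤ A := fun i => hA ▸ le_sup' a (mem_univ i)
  have hA0 : 0 < A := (ha ⟨0, hn⟩).trans_le (haA _)
  have hwp : ∀ i, 0 < a i * p i := fun i => mul_pos (ha i) (hp i)
  have hS0 : 0 < ∑ i, a i * p i := sum_pos (fun i _ => hwp i) univ_nonempty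
  have hq₁' : ∀ P, 0 < P → 0 < q₁ P ∧ ∑ _ : Unit, A * E1 (A / q₁ P) = P := by simpa using hq₁
  have hlim₁ := tendsto_log_div_of_sum_mul_E1_div_eq (fun _ => hA0) (fun _ => hA0) hq₁'
  have hlim₂ := tendsto_log_div_of_sum_mul_E1_div_eq hwp ha hq₂
  have hratio := hlim₂.div hlim₁ (by simp [hA0.ne'])
  simp only [sum_const, card_univ, Fintype.card_unit, one_smul] at hratio
  refine ⟨tendsto_atTop_of_sum_mul_E1_div_eq (fun _ => hA0.le) (fun _ => hA0) hq₁',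
    tendsto_atTop_of_sum_mul_E1_div_eq (fun i => (hwp i).le) ha hq₂, ?_, ?_⟩
  · rw [div_div_div_cancel_left' _ _ one_ne_zero] at hratio
    refine hratio.congr' ?_
    filter_upwards [eventually_ne_atTop 0] with P hP
    exact div_div_div_cancel_right₀ hP _ _
  · rw [one_le_div hS0]
    calc ∑ i, a i * p i ≤ ∑ i, A * p i := sum_le_sum fun i _ => by gcongr; exacts [(hp i).le, haA i]
      _ = A * ∑ i, p i := (mul_sum _ _ _).symm
      _ ≤ A := mul_le_of_le_one_right hA0.le hpsum
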